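/- Let n, k ≥ 1 and N ≥ 2 be integers, and let A ⊆ ℤ^n be a finite set such that for every d ∈ {0, 1, ..., N-1}^n there exists a ∈ ℤ^n with {a + i·d : 1 ≤ i ≤ k} ⊆ A. Then there exists a nonempty compact set F ⊆ ℝ^n with dim_M F ≤ log|A| / log N such that for every r ∈ [0,1]^n there exists a ∈ ℝ^n with {a + i·r : 1 ≤ i ≤ k} ⊆ F. -/

import Mathlib

open Set Filter Bornology

/-- Covering number of `E` by open balls of radius `ε`. -/
noncomputable def covNum {X : Type*} [PseudoMetricSpace X] (E : Set X) (ε : ℝ) : ℕ∞ :=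
  ⨅ (t : Finset X) (_ : E ⊆ ⋃ x ∈ t, Metric.ball x ε), (t.card : ℕ∞)

/-- Upper Minkowski (box-counting) dimension. -/
noncomputable def dimM {X : Type*} [PseudoMetricSpace X] (E : Set X) : ℝ :=
  limsup (fun ε : ℝ => Real.log ((covNum E ε).toNat) / Real.log (1 / ε))
    (nhdsWithin 0 (Ioi 0))

/-- Packing dimension, as modified upper box dimension: the infimum of
`⨆ j, dimM (E j)` over countable covers of the set by bounded sets. -/
noncomputable def dimP {X : Type*} [PseudoMetricSpace X] (E : Set X) : ℝ :=
  sInf { a : ℝ | ∃ f : ℕ → Set X, (E ⊆ ⋃ j, f j) ∧ (∀ j, IsBounded (f j)) ∧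
    a = ⨆ j, dimM (f j) }

/-!
Write each coordinate of `r ∈ [0,1]ⁿ` in base `N`, so that `r = ∑ⱼ N^-(j+1) dⱼ` with digit
vectors `dⱼ ∈ {0,…,N-1}ⁿ`, and pick for every `j` a progression `aⱼ + i dⱼ` (`1 ≤ i ≤ k`) in `A`.
Then `∑ⱼ N^-(j+1) (aⱼ + i dⱼ) = a + i r` with `a = ∑ⱼ N^-(j+1) aⱼ`, so the progression
`a + i r` lies in the set `F` of all sums `∑ⱼ N^-(j+1) xⱼ` with `xⱼ ∈ A`. This `F` is compact,
and truncating the sums after `m` terms covers it by `|A|^m` balls of radius `O(N^-m)`, whence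
`dim_M F ≤ log |A| / log N`.
-/

section CoveringNumber

variable {X : Type*} [PseudoMetricSpace X] {E : Set X}

lemma covNum_le_card {ε : ℝ} {t : Finset X} (ht : E ⊆ ⋃ x ∈ t, Metric.ball x ε) :
    covNum E ε ≤ t.card :=
  iInf₂_le t ht

lemma covNum_anti {ε ε' : ℝ} (h : ε ≤ ε') : covNum E ε' ≤ covNum E ε :=
  le_iInf₂ fun _ ht => covNum_le_card <| ht.trans <|
    iUnion₂_mono fun _ _ => Metric.ball_subset_ball h

lemma log_toNat_le_of_le_pow {c : ℕ∞} {K m : ℕ} (h : c ≤ (K ^ m : ℕ)) :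
    Real.log c.toNat ≤ m * Real.log K := by
  rw [← Real.log_pow, ← Nat.cast_pow]
  rcases Nat.eq_zero_or_pos c.toNat with h0 | hpos
  · rw [h0, Nat.cast_zero, Real.log_zero]
    exact Real.log_natCast_nonneg _
  · exact Real.log_le_log (mod_cast hpos) (mod_cast ENat.toNat_le_of_le_natCast h)

lemma tendsto_log_one_div_nhdsGT_zero :
    Tendsto (fun ε : ℝ => Real.log (1 / ε)) (nhdsWithin 0 (Ioi 0)) atTop := by
  refine (Real.tendsto_log_atTop.comp tendsto_inv_nhdsGT_zero).congr fun ε => ?_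
  simp

lemma log_covNum_div_le {b R : ℝ} {K : ℕ} (hb : 1 < b) (hR : 0 < R)
    (h : ∀ m : ℕ, covNum E (R / b ^ m) ≤ (K ^ m : ℕ)) {ε : ℝ} (hε0 : 0 < ε) (hε1 : ε < 1)
    (hεR : ε < R) :
    Real.log (covNum E ε).toNat / Real.log (1 / ε)
      ≤ Real.log K / Real.log b
        + (Real.log R / Real.log b + 1) * Real.log K / Real.log (1 / ε) := by
  have hlogb : 0 < Real.log b := Real.log_pos hb
  have hL : 0 < Real.log (1 / ε) := Real.log_pos (one_lt_one_div hε0 hε1)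
  have hRε : 1 < R / ε := (one_lt_div hε0).2 hεR
  set m := ⌈Real.logb b (R / ε)⌉₊
  have hm : (m : ℝ) < Real.logb b (R / ε) + 1 := Nat.ceil_lt_add_one (Real.logb_nonneg hb hRε.le)
  have hscale : R / b ^ m ≤ ε := by
    have : R / ε ≤ b ^ m :=
      calc R / ε = b ^ Real.logb b (R / ε) :=
            (Real.rpow_logb (by linarith) hb.ne' (by linarith)).symm
        _ ≤ b ^ (m : ℝ) := Real.rpow_le_rpow_of_exponent_le hb.le (Nat.le_ceil _)
        _ = b ^ m := Real.rpow_natCast b m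
    rw [div_le_iff₀ hε0] at this
    rwa [div_le_iff₀ (pow_pos (by linarith) m), mul_comm]
  have hlogcov := log_toNat_le_of_le_pow ((covNum_anti hscale).trans (h m))
  have hlogRε : Real.logb b (R / ε) = (Real.log R + Real.log (1 / ε)) / Real.log b := by
    rw [Real.logb, div_eq_mul_one_div R, Real.log_mul hR.ne' (by positivity)]
  calc Real.log (covNum E ε).toNat / Real.log (1 / ε)
      ≤ m * Real.log K / Real.log (1 / ε) := by gcongr
    _ ≤ (Real.logb b (R / ε) + 1) * Real.log K / Real.log (1 / ε) := by gcongr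
    _ = _ := by
        rw [hlogRε]
        field_simp
        ring

theorem dimM_le_of_covNum_le {b R : ℝ} {K : ℕ} (hb : 1 < b) (hR : 0 < R)
    (h : ∀ m : ℕ, covNum E (R / b ^ m) ≤ (K ^ m : ℕ)) :
    dimM E ≤ Real.log K / Real.log b := by
  set G : ℝ → ℝ := fun ε =>
    Real.log K / Real.log b + (Real.log R / Real.log b + 1) * Real.log K / Real.log (1 / ε)
  have hG : Tendsto G (nhdsWithin 0 (Ioi 0)) (nhds (Real.log K / Real.log b)) := by
    have h := (tendsto_log_one_div_nhdsGT_zero.inv_tendsto_atTop.const_mul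
      ((Real.log R / Real.log b + 1) * Real.log K)).const_add (Real.log K / Real.log b)
    rw [mul_zero, add_zero] at h
    exact h.congr fun ε => by simp only [G, Pi.inv_apply]; ring
  have hbound : ∀ᶠ ε in nhdsWithin (0 : ℝ) (Ioi 0),
      Real.log (covNum E ε).toNat / Real.log (1 / ε) ≤ G ε := by
    filter_upwards [Ioo_mem_nhdsGT one_pos, Ioo_mem_nhdsGT hR] with ε ⟨hε0, hε1⟩ ⟨_, hεR⟩
    exact log_covNum_div_le hb hR h hε0 hε1 hεR
  have hcobdd : IsCoboundedUnder (· ≤ ·) (nhdsWithin (0 : ℝ) (Ioi 0))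
      fun ε => Real.log (covNum E ε).toNat / Real.log (1 / ε) := by
    refine IsBoundedUnder.isCoboundedUnder_le ⟨0, eventually_map.2 ?_⟩
    filter_upwards [Ioo_mem_nhdsGT one_pos] with ε ⟨hε0, hε1⟩
    have := Real.log_pos (one_lt_one_div hε0 hε1)
    have := Real.log_natCast_nonneg (covNum E ε).toNat
    positivity
  calc dimM E ≤ limsup G (nhdsWithin 0 (Ioi 0)) :=
        limsup_le_limsup hbound hcobdd hG.isBoundedUnder_le
    _ = Real.log K / Real.log b := hG.limsup_eq

end CoveringNumber

lemma hasSum_inv_pow_succ {b : ℝ} (hb : 1 < b) :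
    HasSum (fun j : ℕ => (b ^ (j + 1))⁻¹) (b - 1)⁻¹ := by
  have hb0 : 0 < b := by linarith
  have hsum := (hasSum_geometric_of_lt_one (r := b⁻¹) (by positivity)
    (inv_lt_one_of_one_lt₀ hb)).mul_left b⁻¹
  have hval : b⁻¹ * (1 - b⁻¹)⁻¹ = (b - 1)⁻¹ := by
    have : b - 1 ≠ 0 := by linarith
    field_simp
  simpa only [← inv_pow, ← pow_succ', hval] using hsum

section RadixSum

variable {E : Type*} [NormedAddCommGroup E] [NormedSpace ℝ E] {b C : ℝ} {x : ℕ → E}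

noncomputable def radixSum (b : ℝ) (x : ℕ → E) : E := ∑' j, (b ^ (j + 1))⁻¹ • x j

def radixSet (b : ℝ) (S : Set E) : Set E := radixSum b '' Set.pi univ fun _ => S

lemma norm_radix_term_le (hb : 0 ≤ b) (hx : ∀ j, ‖x j‖ ≤ C) (j : ℕ) :
    ‖(b ^ (j + 1))⁻¹ • x j‖ ≤ C * (b ^ (j + 1))⁻¹ := by
  rw [norm_smul, norm_inv, Real.norm_of_nonneg (pow_nonneg hb _), mul_comm]
  gcongr
  exact hx j

lemma summable_radix_of_norm_le [CompleteSpace E] (hb : 1 < b) (hx : ∀ j, ‖x j‖ ≤ C) :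
    Summable fun j => (b ^ (j + 1))⁻¹ • x j :=
  .of_norm_bounded ((hasSum_inv_pow_succ hb).mul_left C).summable
    (norm_radix_term_le (by linarith) hx)

lemma norm_radixSum_le (hb : 1 < b) (hx : ∀ j, ‖x j‖ ≤ C) :
    ‖radixSum b x‖ ≤ C * (b - 1)⁻¹ :=
  tsum_of_norm_bounded ((hasSum_inv_pow_succ hb).mul_left C) (norm_radix_term_le (by linarith) hx)

lemma radixSum_eq_sum_add (hs : Summable fun j => (b ^ (j + 1))⁻¹ • x j) (m : ℕ) :
    radixSum b x = ∑ j ∈ Finset.range m, (b ^ (j + 1))⁻¹ • x j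
      + (b ^ m)⁻¹ • radixSum b (fun j => x (j + m)) := by
  rw [radixSum, ← hs.sum_add_tsum_nat_add m, radixSum, ← tsum_const_smul'']
  congr 2 with j
  rw [smul_smul, ← mul_inv, ← pow_add]
  ring_nf

lemma norm_radixSum_sub_sum_le [CompleteSpace E] (hb : 1 < b) (hx : ∀ j, ‖x j‖ ≤ C) (m : ℕ) :
    ‖radixSum b x - ∑ j ∈ Finset.range m, (b ^ (j + 1))⁻¹ • x j‖ ≤ C * (b - 1)⁻¹ / b ^ m := by
  have hbm : 0 < b ^ m := pow_pos (by linarith) m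
  rw [radixSum_eq_sum_add (summable_radix_of_norm_le hb hx) m, add_sub_cancel_left,
    norm_smul, norm_inv, Real.norm_of_nonneg hbm.le, inv_mul_eq_div]
  gcongr
  exact norm_radixSum_le hb fun j => hx (j + m)

variable [CompleteSpace E]

theorem isCompact_radixSet (hb : 1 < b) {S : Set E} (hS : IsCompact S) :
    IsCompact (radixSet b S) := by
  obtain ⟨C, hC⟩ := isBounded_iff_forall_norm_le.1 hS.isBounded
  refine (isCompact_univ_pi fun _ => hS).image_of_continuousOn ?_
  refine continuousOn_tsum (fun j => ((continuous_apply j).const_smul _).continuousOn)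
    ((hasSum_inv_pow_succ hb).mul_left C).summable fun j x hx => ?_
  exact norm_radix_term_le (by linarith) (fun j => hC _ (hx j trivial)) j

theorem covNum_radixSet_le (hb : 1 < b) {R : ℝ} (S : Finset E) (hS : ∀ v ∈ S, ‖v‖ ≤ C)
    (hR : C * (b - 1)⁻¹ < R) (m : ℕ) :
    covNum (radixSet b (S : Set E)) (R / b ^ m) ≤ (S.card ^ m : ℕ) := by
  classical
  let center : (Fin m → S) → E := fun w => ∑ j : Fin m, (b ^ (j + 1 : ℕ))⁻¹ • (w j : E)
  calc covNum (radixSet b (S : Set E)) (R / b ^ m)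
      ≤ (Finset.univ.image center).card := by
        refine covNum_le_card ?_
        rintro _ ⟨x, hx, rfl⟩
        refine mem_iUnion₂.2 ⟨center fun j => ⟨x j, hx j trivial⟩, Finset.mem_image_of_mem _
          (Finset.mem_univ _), ?_⟩
        rw [Metric.mem_ball, dist_eq_norm]
        simp only [center, Fin.sum_univ_eq_sum_range (fun j => (b ^ (j + 1))⁻¹ • x j)]
        refine (norm_radixSum_sub_sum_le hb (fun j => hS _ (hx j trivial)) m).trans_lt ?_
        gcongr
    _ ≤ (S.card ^ m : ℕ) := by
        gcongr
        exact Finset.card_image_le.trans (by simp)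

theorem dimM_radixSet_le (hb : 1 < b) (S : Finset E) :
    dimM (radixSet b (S : Set E)) ≤ Real.log S.card / Real.log b := by
  set C := ∑ v ∈ S, ‖v‖
  have hC : 0 ≤ C * (b - 1)⁻¹ := mul_nonneg (by positivity) (inv_nonneg.2 (by linarith))
  exact dimM_le_of_covNum_le hb (by linarith) <| covNum_radixSet_le hb S
    (fun v hv => Finset.single_le_sum (fun v _ => norm_nonneg v) hv) (lt_add_one _)

theorem exists_add_smul_mem_radixSet (hb : 1 < b) {S : Set E} (hS : IsBounded S) {k : ℕ}
    (hk : 1 ≤ k) {a d : ℕ → E} {r : E} (hd : HasSum (fun j => (b ^ (j + 1))⁻¹ • d j) r)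
    (ha : ∀ j, ∀ i ∈ Finset.Icc 1 k, a j + (i : ℝ) • d j ∈ S) :
    ∃ c, ∀ i ∈ Finset.Icc 1 k, c + (i : ℝ) • r ∈ radixSet b S := by
  have hsum : Summable fun j => (b ^ (j + 1))⁻¹ • a j := by
    have hmem : ∀ j, a j + d j ∈ S := fun j => by
      simpa using ha j 1 (Finset.mem_Icc.2 ⟨le_rfl, hk⟩)
    obtain ⟨C, hC⟩ := isBounded_iff_forall_norm_le.1 hS
    simpa only [smul_add, add_sub_cancel_right] using
      (summable_radix_of_norm_le hb fun j => hC _ (hmem j)).sub hd.summable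
  refine ⟨radixSum b a, fun i hi => ⟨fun j => a j + (i : ℝ) • d j, fun j _ => ha j i hi, ?_⟩⟩
  have hterm : ∀ j, (b ^ (j + 1))⁻¹ • (a j + (i : ℝ) • d j)
      = (b ^ (j + 1))⁻¹ • a j + (i : ℝ) • ((b ^ (j + 1))⁻¹ • d j) := fun j => by
    rw [smul_add, smul_comm]
  simpa only [radixSum, hterm] using (hsum.hasSum.add (hd.const_smul (i : ℝ))).tsum_eq

end RadixSum

section IntegerPoints

variable {ι : Type*}

def castToEuclidean (v : ι → ℤ) : EuclideanSpace ℝ ι := WithLp.toLp 2 fun i => (v i : ℝ)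

lemma castToEuclidean_injective : Function.Injective (castToEuclidean (ι := ι)) :=
  fun v w h => funext fun i => by
    simpa [castToEuclidean] using congrFun (congrArg WithLp.ofLp h) i

lemma castToEuclidean_add_zsmul (a d : ι → ℤ) (c : ℤ) :
    castToEuclidean (a + c • d) = castToEuclidean a + (c : ℝ) • castToEuclidean d := by
  ext i
  simp [castToEuclidean]

theorem exists_digits_hasSum [Fintype ι] {N : ℕ} (hN : 1 < N) (r : EuclideanSpace ℝ ι)
    (hr : ∀ i, r i ∈ Icc (0 : ℝ) 1) :
    ∃ d : ℕ → ι → ℤ, (∀ j i, 0 ≤ d j i ∧ d j i < N) ∧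
      HasSum (fun j => ((N : ℝ) ^ (j + 1))⁻¹ • castToEuclidean (d j)) r := by
  choose digits hdigits using fun i => Real.ofDigits_SurjOn hN (hr i)
  refine ⟨fun j i => (digits i j : ℕ), fun j i => ⟨by positivity, by simp⟩,
    (PiLp.continuousLinearEquiv 2 ℝ fun _ : ι => ℝ).hasSum.1 (Pi.hasSum.2 fun i => ?_)⟩
  have h : HasSum (Real.ofDigitsTerm (digits i)) (Real.ofDigits (digits i)) :=
    Real.summable_ofDigitsTerm.hasSum
  rw [← (hdigits i).2]
  refine h.congr_fun fun j => ?_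
  simp [castToEuclidean, Real.ofDigitsTerm, mul_comm]

end IntegerPoints

theorem stmt9_general (n k N : ℕ) (hk : 1 ≤ k) (hN : 2 ≤ N)
    (A : Finset (Fin n → ℤ))
    (hA : ∀ d : Fin n → ℤ, (∀ i, 0 ≤ d i ∧ d i < (N : ℤ)) →
      ∃ a : Fin n → ℤ, ∀ i ∈ Finset.Icc 1 k, a + (i : ℤ) • d ∈ A) :
    ∃ F : Set (EuclideanSpace ℝ (Fin n)), F.Nonempty ∧ IsCompact F ∧
      dimM F ≤ Real.log A.card / Real.log N ∧
      ∀ r : EuclideanSpace ℝ (Fin n), (∀ i, r i ∈ Icc (0 : ℝ) 1) →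
        ∃ a : EuclideanSpace ℝ (Fin n), ∀ i ∈ Finset.Icc 1 k, a + (i : ℝ) • r ∈ F := by
  classical
  have hN' : (1 : ℝ) < N := by exact_mod_cast hN
  set S := A.image castToEuclidean
  have hAP : ∀ r : EuclideanSpace ℝ (Fin n), (∀ i, r i ∈ Icc (0 : ℝ) 1) →
      ∃ a, ∀ i ∈ Finset.Icc 1 k, a + (i : ℝ) • r ∈ radixSet N (S : Set _) := by
    intro r hr
    obtain ⟨d, hd, hsum⟩ := exists_digits_hasSum hN r hr
    choose a ha using fun j => hA (d j) (hd j)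
    refine exists_add_smul_mem_radixSet (a := fun j => castToEuclidean (a j)) hN'
      S.finite_toSet.isBounded hk hsum fun j i hi => ?_
    rw [← Int.cast_natCast, ← castToEuclidean_add_zsmul]
    exact Finset.mem_image_of_mem _ (ha j i hi)
  refine ⟨radixSet N (S : Set _), ?_, isCompact_radixSet hN' S.finite_toSet.isCompact, ?_, hAP⟩
  · obtain ⟨a, ha⟩ := hAP 0 fun i => by simp
    exact ⟨_, ha 1 (Finset.mem_Icc.2 ⟨le_rfl, hk⟩)⟩
  · rw [← Finset.card_image_of_injective A castToEuclidean_injective]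
    exact dimM_radixSet_le hN' S

/-- If a finite set `A ⊆ ℤ^n` contains a `k`-term arithmetic progression with every common
difference `d ∈ {0,…,N-1}^n`, then there is a nonempty compact set `F ⊆ ℝ^n` with
`dim_M F ≤ log|A| / log N` containing a `k`-term arithmetic progression with every common
difference `r ∈ [0,1]^n`. -/
theorem stmt9 (n k N : ℕ) (hn : 1 ≤ n) (hk : 1 ≤ k) (hN : 2 ≤ N)
    (A : Finset (Fin n → ℤ))
    (hA : ∀ d : Fin n → ℤ, (∀ i, 0 ≤ d i ∧ d i < (N : ℤ)) →
      ∃ a : Fin n → ℤ, ∀ i ∈ Finset.Icc 1 k, a + (i : ℤ) • d ∈ A) :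
    ∃ F : Set (EuclideanSpace ℝ (Fin n)), F.Nonempty ∧ IsCompact F ∧
      dimM F ≤ Real.log A.card / Real.log N ∧
      ∀ r : EuclideanSpace ℝ (Fin n), (∀ i, r i ∈ Icc (0 : ℝ) 1) →
        ∃ a : EuclideanSpace ℝ (Fin n), ∀ i ∈ Finset.Icc 1 k, a + (i : ℝ) • r ∈ F :=
  stmt9_general n k N hk hN A hA
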